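/- For every Kripke structure K and every left-positive InqLTL formula φ, and for every macro-path ρ of K: ρ ⊨_K φ under the macro-path semantics if and only if Paths_K(ρ) ⊨_K φ, i.e., the team of traces induced by the paths in Paths_K(ρ) satisfies φ under the InqLTL team semantics. -/

import Mathlib

/-- A trace over the set `AP` of atomic propositions. -/
abbrev Trace (AP : Type) := ℕ → Set AP

/-- A team: a set of traces. -/
abbrev Team (AP : Type) := Set (Trace AP)

/-- The suffix `w≥i` of a trace. -/
def Trace.shift {AP : Type} (w : Trace AP) (i : ℕ) : Trace AP := fun j => w (i + j)

/-- The suffix team `L≥i`. -/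
def Team.shift {AP : Type} (L : Team AP) (i : ℕ) : Team AP := (fun w => Trace.shift w i) '' L

/-- InqLTL formulas over `AP`. -/
inductive InqForm (AP : Type) : Type where
  | bot
  | atom (p : AP)
  | or (φ ψ : InqForm AP)
  | and (φ ψ : InqForm AP)
  | imp (φ ψ : InqForm AP)
  | next (φ : InqForm AP)
  | untl (φ ψ : InqForm AP)
  | rel (φ ψ : InqForm AP)

/-- Team satisfaction for InqLTL. -/
def InqForm.sat {AP : Type} : InqForm AP → Team AP → Prop
  | .bot, L => L = ∅
  | .atom p, L => ∀ w ∈ L, p ∈ w 0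
  | .or φ ψ, L => φ.sat L ∨ ψ.sat L
  | .and φ ψ, L => φ.sat L ∧ ψ.sat L
  | .imp φ ψ, L => ∀ L' ⊆ L, φ.sat L' → ψ.sat L'
  | .next φ, L => φ.sat (L.shift 1)
  | .untl φ ψ, L => ∃ i, ψ.sat (L.shift i) ∧ ∀ k < i, φ.sat (L.shift k)
  | .rel φ ψ, L => ∀ i, ψ.sat (L.shift i) ∨ ∃ k < i, φ.sat (L.shift k)

/-- Positive InqLTL formulas: `φ ::= ⊥ | p | ¬p | φ ⊕ φ | φ ∧ φ | X φ | φ U φ | φ R φ`,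
where `¬p` abbreviates `p → ⊥`. -/
def InqForm.isPositive {AP : Type} : InqForm AP → Prop
  | .bot => True
  | .atom _ => True
  | .imp (.atom _) .bot => True
  | .imp _ _ => False
  | .or φ ψ => φ.isPositive ∧ ψ.isPositive
  | .and φ ψ => φ.isPositive ∧ ψ.isPositive
  | .next φ => φ.isPositive
  | .untl φ ψ => φ.isPositive ∧ ψ.isPositive
  | .rel φ ψ => φ.isPositive ∧ ψ.isPositive

/-- Left-positive InqLTL formulas:
`φ ::= ⊥ | p | ¬ξ | φ ⊕ φ | φ ∧ φ | ψ → φ | X φ | φ U φ | φ R φ`,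
where `ξ` is an arbitrary InqLTL formula, `ψ` is a positive InqLTL formula, and
`¬ξ` abbreviates `ξ → ⊥`. -/
def InqForm.isLeftPositive {AP : Type} : InqForm AP → Prop
  | .bot => True
  | .atom _ => True
  | .imp ψ φ => φ = .bot ∨ (ψ.isPositive ∧ φ.isLeftPositive)
  | .or φ ψ => φ.isLeftPositive ∧ ψ.isLeftPositive
  | .and φ ψ => φ.isLeftPositive ∧ ψ.isLeftPositive
  | .next φ => φ.isLeftPositive
  | .untl φ ψ => φ.isLeftPositive ∧ ψ.isLeftPositive
  | .rel φ ψ => φ.isLeftPositive ∧ ψ.isLeftPositive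

/-- A Kripke structure over `AP` with states `S`: a set of initial states, a
left-total transition relation, and a labelling of states by propositions. -/
structure Kripke (AP S : Type) where
  init : Set S
  R : S → S → Prop
  leftTotal : ∀ s, ∃ s', R s s'
  lab : S → Set AP

/-- A path of `K`. -/
def Kripke.IsPath {AP S : Type} (K : Kripke AP S) (π : ℕ → S) : Prop :=
  ∀ i, K.R (π i) (π (i + 1))

/-- `T'` is a successor macro-state of `T`. -/
def Kripke.MSucc {AP S : Type} (K : Kripke AP S) (T T' : Set S) : Prop :=
  (∀ s ∈ T, ∃ s' ∈ T', K.R s s') ∧ (∀ s' ∈ T', ∃ s ∈ T, K.R s s')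

/-- A macro-path of `K`: an infinite sequence of macro-states, each a successor
of the previous one. -/
def Kripke.IsMacroPath {AP S : Type} (K : Kripke AP S) (ρ : ℕ → Set S) : Prop :=
  ∀ i, K.MSucc (ρ i) (ρ (i + 1))

/-- `Paths_K(ρ)`: the set of paths of `K` encoded by the macro-path `ρ`. -/
def Kripke.PathsIn {AP S : Type} (K : Kripke AP S) (ρ : ℕ → Set S) : Set (ℕ → S) :=
  {π | K.IsPath π ∧ ∀ i, π i ∈ ρ i}

/-- The suffix `ρ≥i` of a macro-path. -/
def mshift {S : Type} (ρ : ℕ → Set S) (i : ℕ) : ℕ → Set S := fun j => ρ (i + j)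

/-- The macro-path semantics `ρ ⊨_K φ` of InqLTL. -/
def Kripke.msat {AP S : Type} (K : Kripke AP S) : InqForm AP → (ℕ → Set S) → Prop
  | .bot, ρ => K.PathsIn ρ = ∅
  | .atom p, ρ => ∀ s ∈ ρ 0, p ∈ K.lab s
  | .or φ ψ, ρ => K.msat φ ρ ∨ K.msat ψ ρ
  | .and φ ψ, ρ => K.msat φ ρ ∧ K.msat ψ ρ
  | .imp φ ψ, ρ =>
      ∀ ρ', K.IsMacroPath ρ' → (∀ i, ρ' i ⊆ ρ i) → K.msat φ ρ' → K.msat ψ ρ'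
  | .next φ, ρ => K.msat φ (mshift ρ 1)
  | .untl φ ψ, ρ => ∃ i, K.msat ψ (mshift ρ i) ∧ ∀ k < i, K.msat φ (mshift ρ k)
  | .rel φ ψ, ρ => ∀ i, K.msat ψ (mshift ρ i) ∨ ∃ k < i, K.msat φ (mshift ρ k)

/-- The trace induced by a path of `K`. -/
def Kripke.traceOf {AP S : Type} (K : Kripke AP S) (π : ℕ → S) : Trace AP :=
  fun i => K.lab (π i)

/-- `L_K(Π)`: the team of traces induced by a set of paths of `K`. -/
def Kripke.teamOf {AP S : Type} (K : Kripke AP S) (Ps : Set (ℕ → S)) : Team AP :=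
  K.traceOf '' Ps

/-!
Both semantics are downward closed, and on a macro-path `ρ` they agree on atoms, on the Boolean
connectives and on the temporal operators, since the suffixes of the paths through `ρ` are exactly
the paths through the suffixes of `ρ`. They can only part ways at an implication, because a subteam
of `L_K(Paths_K(ρ))` need not be the team of a sub-macro-path of `ρ`.

For a positive antecedent `ψ` this does not matter. The states visited by the paths of a subteam
`L'` form a sub-macro-path whose team contains `L'` and is covered by `L'` pointwise, time by time;
positive formulas, whose only negations are `¬p`, transfer along such coverings. A negation `¬ξ`
holds on both sides iff `ξ` fails on every single path, and on a single path the two semantics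
agree for every formula: the only sub-macro-paths there are the path itself and the empty one,
matching the two subteams of a singleton team.
-/

theorem Team.shift_mono {AP : Type} {L L' : Team AP} (h : L' ⊆ L) (i : ℕ) :
    L'.shift i ⊆ L.shift i :=
  Set.image_mono h

def Team.CoveredBy {AP : Type} (M L : Team AP) : Prop :=
  ∀ w ∈ M, ∀ i, ∃ v ∈ L, w i = v i

theorem Team.CoveredBy.shift {AP : Type} {M L : Team AP} (h : M.CoveredBy L) (i : ℕ) :
    (M.shift i).CoveredBy (L.shift i) := by
  rintro _ ⟨w, hw, rfl⟩ j
  obtain ⟨v, hv, he⟩ := h w hw (i + j)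
  exact ⟨v.shift i, ⟨v, hv, rfl⟩, he⟩

namespace InqForm

variable {AP : Type}

theorem sat_of_subset : ∀ (φ : InqForm AP) {L L' : Team AP}, L' ⊆ L → φ.sat L → φ.sat L'
  | .bot, _, _, h, hL => Set.subset_empty_iff.mp (hL ▸ h)
  | .atom _, _, _, h, hL => fun w hw => hL w (h hw)
  | .or φ ψ, _, _, h, hL => hL.imp (φ.sat_of_subset h) (ψ.sat_of_subset h)
  | .and φ ψ, _, _, h, hL => ⟨φ.sat_of_subset h hL.1, ψ.sat_of_subset h hL.2⟩
  | .imp _ _, _, _, h, hL => fun L'' h'' => hL L'' (h''.trans h)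
  | .next φ, _, _, h, hL => φ.sat_of_subset (Team.shift_mono h 1) hL
  | .untl φ ψ, _, _, h, ⟨i, hψ, hφ⟩ =>
    ⟨i, ψ.sat_of_subset (Team.shift_mono h i) hψ,
      fun k hk => φ.sat_of_subset (Team.shift_mono h k) (hφ k hk)⟩
  | .rel φ ψ, _, _, h, hL => fun i => (hL i).imp (ψ.sat_of_subset (Team.shift_mono h i))
      fun ⟨k, hk, hφ⟩ => ⟨k, hk, φ.sat_of_subset (Team.shift_mono h k) hφ⟩

theorem sat_neg_iff (ξ : InqForm AP) (L : Team AP) :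
    (ξ.imp .bot).sat L ↔ ∀ w ∈ L, ¬ ξ.sat {w} := by
  refine ⟨fun h w hw hξ => Set.singleton_ne_empty w (h {w} (Set.singleton_subset_iff.mpr hw) hξ),
    fun h L' hL' hξ => Set.eq_empty_iff_forall_notMem.mpr fun w hw => ?_⟩
  exact h w (hL' hw) (ξ.sat_of_subset (Set.singleton_subset_iff.mpr hw) hξ)

theorem sat_neg_atom_iff (p : AP) (L : Team AP) :
    ((atom p).imp .bot).sat L ↔ ∀ w ∈ L, p ∉ w 0 := by
  rw [sat_neg_iff]
  simp only [sat, Set.mem_singleton_iff, forall_eq]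

theorem exists_atom_of_isPositive_imp {φ ψ : InqForm AP} (h : (φ.imp ψ).isPositive) :
    ∃ p, φ = .atom p ∧ ψ = .bot := by
  cases φ <;> cases ψ <;> simp_all [isPositive]

theorem isLeftPositive_of_isPositive : ∀ {φ : InqForm AP}, φ.isPositive → φ.isLeftPositive
  | .bot, _ | .atom _, _ => trivial
  | .imp _ _, h => Or.inl (exists_atom_of_isPositive_imp h).choose_spec.2
  | .or _ _, h | .and _ _, h | .untl _ _, h | .rel _ _, h =>
    ⟨isLeftPositive_of_isPositive h.1, isLeftPositive_of_isPositive h.2⟩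
  | .next φ, h => isLeftPositive_of_isPositive (φ := φ) h

theorem sat_of_coveredBy : ∀ {ψ : InqForm AP}, ψ.isPositive →
    ∀ {L M : Team AP}, M.CoveredBy L → ψ.sat L → ψ.sat M
  | .bot, _, _, _, h, hL => Set.eq_empty_iff_forall_notMem.mpr fun w hw => by
    obtain ⟨v, hv, -⟩ := h w hw 0
    exact Set.notMem_empty v (hL ▸ hv)
  | .atom p, _, _, _, h, hL => fun w hw => by
    obtain ⟨v, hv, he⟩ := h w hw 0
    exact he ▸ hL v hv
  | .imp φ ψ, hpos, _, _, h, hL => by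
    obtain ⟨p, rfl, rfl⟩ := exists_atom_of_isPositive_imp hpos
    rw [sat_neg_atom_iff] at hL ⊢
    intro w hw hp
    obtain ⟨v, hv, he⟩ := h w hw 0
    exact hL v hv (he ▸ hp)
  | .or _ _, hpos, _, _, h, hL =>
    hL.imp (sat_of_coveredBy hpos.1 h) (sat_of_coveredBy hpos.2 h)
  | .and _ _, hpos, _, _, h, hL => ⟨sat_of_coveredBy hpos.1 h hL.1, sat_of_coveredBy hpos.2 h hL.2⟩
  | .next ψ, hpos, _, _, h, hL => sat_of_coveredBy (ψ := ψ) hpos (h.shift 1) hL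
  | .untl _ _, hpos, _, _, h, ⟨i, hψ, hφ⟩ =>
    ⟨i, sat_of_coveredBy hpos.2 (h.shift i) hψ,
      fun k hk => sat_of_coveredBy hpos.1 (h.shift k) (hφ k hk)⟩
  | .rel _ _, hpos, _, _, h, hL => fun i => (hL i).imp (sat_of_coveredBy hpos.2 (h.shift i))
      fun ⟨k, hk, hφ⟩ => ⟨k, hk, sat_of_coveredBy hpos.1 (h.shift k) hφ⟩

end InqForm

def macroPathOf {S : Type} (Ps : Set (ℕ → S)) : ℕ → Set S :=
  fun i => (fun π => π i) '' Ps

namespace Kripke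

section Paths

variable {AP S : Type} (K : Kripke AP S)

abbrev macroTeam (ρ : ℕ → Set S) : Team AP :=
  K.teamOf (K.PathsIn ρ)

theorem pathsIn_mono {ρ ρ' : ℕ → Set S} (h : ∀ i, ρ' i ⊆ ρ i) : K.PathsIn ρ' ⊆ K.PathsIn ρ :=
  fun _ hπ => ⟨hπ.1, fun i => h i (hπ.2 i)⟩

theorem macroTeam_mono {ρ ρ' : ℕ → Set S} (h : ∀ i, ρ' i ⊆ ρ i) :
    K.macroTeam ρ' ⊆ K.macroTeam ρ :=
  Set.image_mono (K.pathsIn_mono h)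

theorem msat_of_le : ∀ (φ : InqForm AP) {ρ ρ' : ℕ → Set S},
    (∀ i, ρ' i ⊆ ρ i) → K.msat φ ρ → K.msat φ ρ'
  | .bot, _, _, h, hρ => Set.subset_empty_iff.mp (hρ ▸ K.pathsIn_mono h)
  | .atom _, _, _, h, hρ => fun s hs => hρ s (h 0 hs)
  | .or φ ψ, _, _, h, hρ => hρ.imp (msat_of_le φ h) (msat_of_le ψ h)
  | .and φ ψ, _, _, h, hρ => ⟨msat_of_le φ h hρ.1, msat_of_le ψ h hρ.2⟩
  | .imp _ _, _, _, h, hρ => fun ρ'' hρ'' h'' => hρ ρ'' hρ'' fun i => (h'' i).trans (h i)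
  | .next φ, _, _, h, hρ => msat_of_le φ (fun j => h (1 + j)) hρ
  | .untl φ ψ, _, _, h, ⟨i, hψ, hφ⟩ =>
    ⟨i, msat_of_le ψ (fun j => h (i + j)) hψ,
      fun k hk => msat_of_le φ (fun j => h (k + j)) (hφ k hk)⟩
  | .rel φ ψ, _, _, h, hρ => fun i => (hρ i).imp (msat_of_le ψ fun j => h (i + j))
      fun ⟨k, hk, hφ⟩ => ⟨k, hk, msat_of_le φ (fun j => h (k + j)) hφ⟩

theorem isMacroPath_macroPathOf {Ps : Set (ℕ → S)} (h : Ps ⊆ {π | K.IsPath π}) :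
    K.IsMacroPath (macroPathOf Ps) := fun i =>
  ⟨fun _ ⟨π, hπ, hs⟩ => ⟨π (i + 1), ⟨π, hπ, rfl⟩, hs ▸ h hπ i⟩,
    fun _ ⟨π, hπ, hs⟩ => ⟨π i, ⟨π, hπ, rfl⟩, hs ▸ h hπ i⟩⟩

theorem subset_pathsIn_macroPathOf {Ps : Set (ℕ → S)} (h : Ps ⊆ {π | K.IsPath π}) :
    Ps ⊆ K.PathsIn (macroPathOf Ps) :=
  fun π hπ => ⟨h hπ, fun _ => ⟨π, hπ, rfl⟩⟩

theorem macroPathOf_subset {Ps : Set (ℕ → S)} {ρ : ℕ → Set S} (h : Ps ⊆ K.PathsIn ρ) (i : ℕ) :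
    macroPathOf Ps i ⊆ ρ i := by
  rintro _ ⟨π, hπ, rfl⟩
  exact (h hπ).2 i

theorem pathsIn_macroPathOf_singleton {π : ℕ → S} (hπ : K.IsPath π) :
    K.PathsIn (macroPathOf {π}) = {π} := by
  refine Set.Subset.antisymm (fun π' hπ' => funext fun i => ?_)
    (K.subset_pathsIn_macroPathOf (Set.singleton_subset_iff.mpr hπ))
  obtain ⟨_, rfl, he⟩ := hπ'.2 i
  exact he.symm

theorem macroTeam_macroPathOf_singleton {π : ℕ → S} (hπ : K.IsPath π) :
    K.macroTeam (macroPathOf {π}) = {K.traceOf π} := by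
  rw [macroTeam, K.pathsIn_macroPathOf_singleton hπ, teamOf, Set.image_singleton]

theorem macroTeam_macroPathOf_coveredBy (Ps : Set (ℕ → S)) :
    (K.macroTeam (macroPathOf Ps)).CoveredBy (K.teamOf Ps) := by
  rintro _ ⟨π', hπ', rfl⟩ i
  obtain ⟨π, hπ, he⟩ := hπ'.2 i
  exact ⟨K.traceOf π, ⟨π, hπ, rfl⟩, congrArg K.lab he.symm⟩

theorem msat_neg_iff (ξ : InqForm AP) (ρ : ℕ → Set S) :
    K.msat (ξ.imp .bot) ρ ↔ ∀ π ∈ K.PathsIn ρ, ¬ K.msat ξ (macroPathOf {π}) := by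
  refine ⟨fun h π hπ hξ => ?_, fun h ρ' _ hle hξ => ?_⟩
  · have hσ := K.isMacroPath_macroPathOf (Set.singleton_subset_iff.mpr hπ.1)
    have hempty := h _ hσ (K.macroPathOf_subset (Set.singleton_subset_iff.mpr hπ)) hξ
    exact Set.singleton_ne_empty π (K.pathsIn_macroPathOf_singleton hπ.1 ▸ hempty)
  · refine Set.eq_empty_iff_forall_notMem.mpr fun π hπ => h π (K.pathsIn_mono hle hπ) ?_
    exact K.msat_of_le ξ (K.macroPathOf_subset (Set.singleton_subset_iff.mpr hπ)) hξ

namespace IsMacroPath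

variable {K : Kripke AP S} {ρ : ℕ → Set S}

theorem mshift (hρ : K.IsMacroPath ρ) (i : ℕ) : K.IsMacroPath (mshift ρ i) := fun j => by
  simpa only [_root_.mshift, Nat.add_assoc] using hρ (i + j)

theorem exists_mem_pathsIn (hρ : K.IsMacroPath ρ) {s : S} (hs : s ∈ ρ 0) :
    ∃ π ∈ K.PathsIn ρ, π 0 = s := by
  choose next hnext hR using fun i (t : ρ i) => (hρ i).1 t t.2
  let π : (i : ℕ) → ρ i := fun i => Nat.rec ⟨s, hs⟩ (fun i t => ⟨next i t, hnext i t⟩) i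
  exact ⟨fun i => (π i).1, ⟨fun i => hR i (π i), fun i => (π i).2⟩, rfl⟩

theorem exists_pathsIn_shift_eq (hρ : K.IsMacroPath ρ) (i : ℕ) {π' : ℕ → S}
    (hπ' : π' ∈ K.PathsIn (_root_.mshift ρ i)) : ∃ π ∈ K.PathsIn ρ, ∀ j, π (i + j) = π' j := by
  induction i generalizing π' with
  | zero => exact ⟨π', ⟨hπ'.1, fun j => by simpa [_root_.mshift] using hπ'.2 j⟩, fun j => by simp⟩
  | succ i ih =>
    -- prepend to `π'` a predecessor `s` of its first state
    obtain ⟨s, hs, hR⟩ := (hρ i).2 (π' 0) (hπ'.2 0)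
    have hcons : (fun j => Nat.casesOn j s π' : ℕ → S) ∈ K.PathsIn (_root_.mshift ρ i) := by
      refine ⟨fun j => ?_, fun j => ?_⟩ <;> rcases j with _ | j
      · exact hR
      · exact hπ'.1 j
      · exact hs
      · exact (Nat.add_right_comm i 1 j ▸ hπ'.2 j : π' j ∈ ρ (i + j + 1))
    obtain ⟨π, hπ, heq⟩ := ih hcons
    exact ⟨π, hπ, fun j => Nat.add_right_comm i 1 j ▸ heq (j + 1)⟩

theorem macroTeam_mshift (hρ : K.IsMacroPath ρ) (i : ℕ) :
    K.macroTeam (_root_.mshift ρ i) = (K.macroTeam ρ).shift i := by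
  ext w
  constructor
  · rintro ⟨π', hπ', rfl⟩
    obtain ⟨π, hπ, heq⟩ := hρ.exists_pathsIn_shift_eq i hπ'
    exact ⟨K.traceOf π, ⟨π, hπ, rfl⟩, funext fun j => congrArg K.lab (heq j)⟩
  · rintro ⟨_, ⟨π, hπ, rfl⟩, rfl⟩
    exact ⟨fun j => π (i + j), ⟨fun j => hπ.1 (i + j), fun j => hπ.2 (i + j)⟩, rfl⟩

end IsMacroPath

end Paths

section Agreement

variable {AP S : Type} (K : Kripke AP S) {M : Set (ℕ → Set S)}

def AgreeOn (M : Set (ℕ → Set S)) (φ : InqForm AP) : Prop :=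
  ∀ ρ ∈ M, K.IsMacroPath ρ → (K.msat φ ρ ↔ φ.sat (K.macroTeam ρ))

def ShiftClosed (M : Set (ℕ → Set S)) : Prop :=
  ∀ ρ ∈ M, K.IsMacroPath ρ → ∀ i, mshift ρ i ∈ M

variable {K}

theorem AgreeOn.mshift {φ : InqForm AP} (h : K.AgreeOn M φ) (hM : K.ShiftClosed M)
    {ρ : ℕ → Set S} (hρM : ρ ∈ M) (hρ : K.IsMacroPath ρ) (i : ℕ) :
    K.msat φ (_root_.mshift ρ i) ↔ φ.sat ((K.macroTeam ρ).shift i) :=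
  hρ.macroTeam_mshift i ▸ h _ (hM ρ hρM hρ i) (hρ.mshift i)

variable (K)

theorem agreeOn_bot : K.AgreeOn M .bot :=
  fun _ _ _ => Set.image_eq_empty.symm

theorem agreeOn_atom (p : AP) : K.AgreeOn M (.atom p) := fun _ _ hρ => by
  refine ⟨fun h _ ⟨π, hπ, hw⟩ => hw ▸ h _ (hπ.2 0), fun h s hs => ?_⟩
  obtain ⟨π, hπ, rfl⟩ := hρ.exists_mem_pathsIn hs
  exact h _ ⟨π, hπ, rfl⟩

variable {K} {φ ψ : InqForm AP}

theorem AgreeOn.or (hφ : K.AgreeOn M φ) (hψ : K.AgreeOn M ψ) : K.AgreeOn M (φ.or ψ) :=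
  fun ρ hρM hρ => or_congr (hφ ρ hρM hρ) (hψ ρ hρM hρ)

theorem AgreeOn.and (hφ : K.AgreeOn M φ) (hψ : K.AgreeOn M ψ) : K.AgreeOn M (φ.and ψ) :=
  fun ρ hρM hρ => and_congr (hφ ρ hρM hρ) (hψ ρ hρM hρ)

theorem AgreeOn.next (hM : K.ShiftClosed M) (hφ : K.AgreeOn M φ) : K.AgreeOn M φ.next :=
  fun _ hρM hρ => hφ.mshift hM hρM hρ 1

theorem AgreeOn.untl (hM : K.ShiftClosed M) (hφ : K.AgreeOn M φ) (hψ : K.AgreeOn M ψ) :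
    K.AgreeOn M (φ.untl ψ) := fun _ hρM hρ =>
  exists_congr fun i => and_congr (hψ.mshift hM hρM hρ i)
    (forall₂_congr fun k _ => hφ.mshift hM hρM hρ k)

theorem AgreeOn.rel (hM : K.ShiftClosed M) (hφ : K.AgreeOn M φ) (hψ : K.AgreeOn M ψ) :
    K.AgreeOn M (φ.rel ψ) := fun _ hρM hρ =>
  forall_congr' fun i => or_congr (hψ.mshift hM hρM hρ i)
    (exists_congr fun k => and_congr_right' (hφ.mshift hM hρM hρ k))

variable (K)

theorem shiftClosed_univ : K.ShiftClosed Set.univ :=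
  fun _ _ _ _ => Set.mem_univ _

theorem shiftClosed_subsingleton : K.ShiftClosed {ρ | (K.macroTeam ρ).Subsingleton} :=
  fun _ hρM hρ i => by
    rw [Set.mem_ofPred_eq, hρ.macroTeam_mshift i]
    exact hρM.image _

variable {K}

theorem IsMacroPath.exists_macroTeam_eq_of_subsingleton {ρ : ℕ → Set S} (hρ : K.IsMacroPath ρ)
    (hsub : (K.macroTeam ρ).Subsingleton) {L : Team AP} (hL : L ⊆ K.macroTeam ρ) :
    ∃ ρ', K.IsMacroPath ρ' ∧ (∀ i, ρ' i ⊆ ρ i) ∧ K.macroTeam ρ' = L := by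
  rcases L.eq_empty_or_nonempty with rfl | ⟨w, hw⟩
  · refine ⟨macroPathOf ∅, K.isMacroPath_macroPathOf (Set.empty_subset _),
      K.macroPathOf_subset (Set.empty_subset _), ?_⟩
    refine Set.eq_empty_iff_forall_notMem.mpr fun _ ⟨π, hπ, _⟩ => ?_
    obtain ⟨_, h, _⟩ := hπ.2 0
    exact h
  · refine ⟨ρ, hρ, fun _ => subset_rfl, ?_⟩
    rw [hsub.eq_singleton_of_mem (hL hw), (hsub.anti hL).eq_singleton_of_mem hw]

theorem AgreeOn.imp_of_subsingleton (hφ : K.AgreeOn {ρ | (K.macroTeam ρ).Subsingleton} φ)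
    (hψ : K.AgreeOn {ρ | (K.macroTeam ρ).Subsingleton} ψ) :
    K.AgreeOn {ρ | (K.macroTeam ρ).Subsingleton} (φ.imp ψ) := by
  intro ρ hsub hρ
  refine ⟨fun h L hL hφL => ?_, fun h ρ' hρ' hle hφρ' => ?_⟩
  · obtain ⟨ρ', hρ', hle, rfl⟩ := hρ.exists_macroTeam_eq_of_subsingleton hsub hL
    have hsub' := hsub.anti hL
    exact (hψ ρ' hsub' hρ').mp (h ρ' hρ' hle ((hφ ρ' hsub' hρ').mpr hφL))
  · have hteam := K.macroTeam_mono hle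
    have hsub' := hsub.anti hteam
    exact (hψ ρ' hsub' hρ').mpr (h _ hteam ((hφ ρ' hsub' hρ').mp hφρ'))

variable (K)

theorem agreeOn_subsingleton : ∀ φ : InqForm AP, K.AgreeOn {ρ | (K.macroTeam ρ).Subsingleton} φ
  | .bot => K.agreeOn_bot
  | .atom p => K.agreeOn_atom p
  | .or φ ψ => (agreeOn_subsingleton φ).or (agreeOn_subsingleton ψ)
  | .and φ ψ => (agreeOn_subsingleton φ).and (agreeOn_subsingleton ψ)
  | .imp φ ψ => (agreeOn_subsingleton φ).imp_of_subsingleton (agreeOn_subsingleton ψ)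
  | .next φ => (agreeOn_subsingleton φ).next K.shiftClosed_subsingleton
  | .untl φ ψ =>
    (agreeOn_subsingleton φ).untl K.shiftClosed_subsingleton (agreeOn_subsingleton ψ)
  | .rel φ ψ => (agreeOn_subsingleton φ).rel K.shiftClosed_subsingleton (agreeOn_subsingleton ψ)

theorem agreeOn_neg (ξ : InqForm AP) : K.AgreeOn M (ξ.imp .bot) := fun ρ _ _ => by
  rw [msat_neg_iff, InqForm.sat_neg_iff, macroTeam, teamOf, Set.forall_mem_image]
  refine forall₂_congr fun π hπ => not_congr ?_
  have hteam := K.macroTeam_macroPathOf_singleton hπ.1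
  have hσ := K.agreeOn_subsingleton ξ (macroPathOf {π})
    (by rw [Set.mem_ofPred_eq, hteam]; exact Set.subsingleton_singleton)
    (K.isMacroPath_macroPathOf (Set.singleton_subset_iff.mpr hπ.1))
  rwa [hteam] at hσ

variable {K}

theorem AgreeOn.imp_of_isPositive (hψpos : ψ.isPositive) (hψ : K.AgreeOn Set.univ ψ)
    (hφ : K.AgreeOn Set.univ φ) : K.AgreeOn Set.univ (ψ.imp φ) := by
  intro ρ _ hρ
  refine ⟨fun h L hL hψL => ?_, fun h ρ' hρ' hle hψρ' => ?_⟩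
  · set Ps := K.PathsIn ρ ∩ K.traceOf ⁻¹' L
    have hPs : K.teamOf Ps = L := by
      rw [teamOf, Set.image_inter_preimage]
      exact Set.inter_eq_right.mpr hL
    have hpaths : Ps ⊆ {π | K.IsPath π} := fun _ hπ => hπ.1.1
    have hρ' := K.isMacroPath_macroPathOf hpaths
    have hle := K.macroPathOf_subset (Set.inter_subset_left : Ps ⊆ K.PathsIn ρ)
    have hψρ' : ψ.sat (K.macroTeam (macroPathOf Ps)) :=
      InqForm.sat_of_coveredBy hψpos (hPs ▸ K.macroTeam_macroPathOf_coveredBy Ps) hψL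
    have hφρ' := (hφ _ trivial hρ').mp (h _ hρ' hle ((hψ _ trivial hρ').mpr hψρ'))
    exact φ.sat_of_subset (hPs ▸ Set.image_mono (K.subset_pathsIn_macroPathOf hpaths)) hφρ'
  · exact (hφ ρ' trivial hρ').mpr (h _ (K.macroTeam_mono hle) ((hψ ρ' trivial hρ').mp hψρ'))

variable (K)

theorem agreeOn_univ_of_isLeftPositive :
    ∀ {φ : InqForm AP}, φ.isLeftPositive → K.AgreeOn Set.univ φ
  | .bot, _ => K.agreeOn_bot
  | .atom p, _ => K.agreeOn_atom p
  | .or _ _, h => (agreeOn_univ_of_isLeftPositive h.1).or (agreeOn_univ_of_isLeftPositive h.2)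
  | .and _ _, h => (agreeOn_univ_of_isLeftPositive h.1).and (agreeOn_univ_of_isLeftPositive h.2)
  | .imp ψ φ, h => by
    rcases h with rfl | ⟨hψ, hφ⟩
    · exact K.agreeOn_neg ψ
    · exact .imp_of_isPositive hψ
        (agreeOn_univ_of_isLeftPositive (InqForm.isLeftPositive_of_isPositive hψ))
        (agreeOn_univ_of_isLeftPositive hφ)
  | .next φ, h => (agreeOn_univ_of_isLeftPositive (φ := φ) h).next K.shiftClosed_univ
  | .untl _ _, h => (agreeOn_univ_of_isLeftPositive h.1).untl K.shiftClosed_univ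
      (agreeOn_univ_of_isLeftPositive h.2)
  | .rel _ _, h => (agreeOn_univ_of_isLeftPositive h.1).rel K.shiftClosed_univ
      (agreeOn_univ_of_isLeftPositive h.2)

end Agreement

end Kripke

theorem leftPositive_msat_iff_team_general {AP S : Type} (K : Kripke AP S)
    (φ : InqForm AP) (hφ : φ.isLeftPositive) (ρ : ℕ → Set S)
    (hρ : K.IsMacroPath ρ) :
    K.msat φ ρ ↔ φ.sat (K.teamOf (K.PathsIn ρ)) :=
  K.agreeOn_univ_of_isLeftPositive hφ ρ (Set.mem_univ ρ) hρ

/-- for left-positive InqLTL formulas, the macro-path semantics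
agrees with the team semantics on the set of paths encoded by the macro-path. -/
theorem leftPositive_msat_iff_team {AP S : Type} [Fintype AP] (K : Kripke AP S)
    (φ : InqForm AP) (hφ : φ.isLeftPositive) (ρ : ℕ → Set S)
    (hρ : K.IsMacroPath ρ) :
    K.msat φ ρ ↔ φ.sat (K.teamOf (K.PathsIn ρ)) :=
  leftPositive_msat_iff_team_general K φ hφ ρ hρ
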